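/- arXiv:2202.13957 — 7 statements merged into one kernel-verified Lean document; each statement's English description precedes it below -/
import Mathlib

section
/- Let q ∈ k^× with q of finite order N > 1, and let a, b ∈ k^×. The N-dimensional k_q[X,Y]-module U_{a,b}, defined on k^N with basis e_1,...,e_N by X·e_i = a q^{i-1} e_i, Y·e_j = e_{j+1} (j < N), Y·e_N = b e_1, is a simple module. -/
/-- The module `U_{a,b}` over the quantum plane `k_q[X,Y]` (with `ord q = N > 1`,
`a, b ≠ 0`), realized on `Fin N → k` with `X e_i = a q^i e_i`,
`Y e_i = e_{i+1}` (for `i+1 < N`), `Y e_{N-1} = b e_0`, is simple. -/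
theorem stmt3 {k : Type*} [Field k] [IsAlgClosed k] [CharZero k]
    (q : k) (N : ℕ) (hN : 1 < N) (hqN : q ^ N = 1)
    (hord : ∀ m : ℕ, 0 < m → m < N → q ^ m ≠ 1)
    (a b : k) (ha : a ≠ 0) (hb : b ≠ 0)
    (X Y : Module.End k (Fin N → k))
    (hrel : X * Y = q • (Y * X))
    (hX : ∀ i : Fin N,
      X (Pi.single i (1 : k)) = (a * q ^ (i : ℕ)) • (Pi.single i (1 : k) : Fin N → k))
    (hY : ∀ i : Fin N,
      Y (Pi.single i (1 : k)) =
        if h : (i : ℕ) + 1 < N then (Pi.single (⟨(i : ℕ) + 1, h⟩ : Fin N) (1 : k) : Fin N → k)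
        else b • (Pi.single (⟨0, by omega⟩ : Fin N) (1 : k) : Fin N → k)) :
    ∀ W : Submodule k (Fin N → k), (∀ v ∈ W, X v ∈ W ∧ Y v ∈ W) → W = ⊥ ∨ W = ⊤ := by
  intro W hW
  classical
  by_cases hWbot : W = ⊥
  · exact Or.inl hWbot
  right
  have hq0 : q ≠ 0 := by
    intro h
    rw [h, zero_pow (by omega)] at hqN
    exact one_ne_zero hqN.symm
  -- q^i are pairwise distinct for i < N
  have hqinj : ∀ i j : Fin N, q ^ (i : ℕ) = q ^ (j : ℕ) → i = j := by
    have aux : ∀ i j : ℕ, i ≤ j → j < N → q ^ i = q ^ j → i = j := by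
      intro i j hij hjN h
      by_contra hne
      have h1 : q ^ (j - i) * q ^ i = q ^ i := by
        rw [← pow_add]
        rw [Nat.sub_add_cancel hij, ← h]
      have h2 : q ^ (j - i) = 1 :=
        mul_right_cancel₀ (pow_ne_zero _ hq0) (by rw [h1, one_mul])
      exact hord (j - i) (by omega) (by omega) h2
    intro i j h
    rcases le_total (i : ℕ) (j : ℕ) with hle | hle
    · exact Fin.ext (aux i j hle j.isLt h)
    · exact Fin.ext (aux j i hle i.isLt h.symm).symm
  -- pointwise action of X
  have hXv : ∀ v : Fin N → k, ∀ l : Fin N, X v l = a * q ^ (l : ℕ) * v l := by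
    intro v l
    have hv : v = ∑ i, v i • (Pi.single i (1 : k) : Fin N → k) := by
      conv_lhs => rw [← Finset.univ_sum_single v]
      refine Finset.sum_congr rfl fun i _ => ?_
      rw [← Pi.single_smul, smul_eq_mul, mul_one]
    conv_lhs => rw [hv]
    rw [map_sum]
    simp only [map_smul, hX]
    simp [Finset.sum_apply, Pi.single_apply, mul_comm]
  -- extract a basis vector from any nonzero vector of W
  have key : ∀ n : ℕ, ∀ v : Fin N → k, v ∈ W → v ≠ 0 →
      (Finset.univ.filter fun l => v l ≠ 0).card ≤ n →
      ∃ i : Fin N, (Pi.single i (1 : k) : Fin N → k) ∈ W := by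
    intro n
    induction n with
    | zero =>
      intro v hv hv0 hcard
      exfalso
      apply hv0
      ext l
      have : l ∉ Finset.univ.filter fun l => v l ≠ 0 := by
        intro hl
        have := Finset.card_pos.mpr ⟨l, hl⟩
        omega
      simpa using this
    | succ n ih =>
      intro v hv hv0 hcard
      obtain ⟨i, hi⟩ : ∃ i, v i ≠ 0 := Function.ne_iff.mp hv0
      by_cases hsub : ∀ l, v l ≠ 0 → l = i
      · refine ⟨i, ?_⟩
        have heq : (Pi.single i (1 : k) : Fin N → k) = (v i)⁻¹ • v := by
          ext l
          by_cases hl : l = i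
          · subst hl
            simp [Pi.single_apply, inv_mul_cancel₀ hi]
          · have : v l = 0 := by
              by_contra h
              exact hl (hsub l h)
            simp [Pi.single_apply, hl, this]
        rw [heq]
        exact W.smul_mem _ hv
      · push_neg at hsub
        obtain ⟨j, hj, hji⟩ := hsub
        set w : Fin N → k := X v - (a * q ^ (j : ℕ)) • v with hw
        have hwW : w ∈ W := W.sub_mem (hW v hv).1 (W.smul_mem _ hv)
        have hwl : ∀ l, w l = (a * q ^ (l : ℕ) - a * q ^ (j : ℕ)) * v l := by
          intro l
          simp only [hw, Pi.sub_apply, Pi.smul_apply, smul_eq_mul, hXv]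
          ring
        have hcoef : a * q ^ (i : ℕ) - a * q ^ (j : ℕ) ≠ 0 := by
          intro h
          have : q ^ (i : ℕ) = q ^ (j : ℕ) :=
            mul_left_cancel₀ ha (sub_eq_zero.mp h)
          exact hji (hqinj i j this).symm
        have hwi : w i ≠ 0 := by
          rw [hwl]
          exact mul_ne_zero hcoef hi
        have hwj : w j = 0 := by rw [hwl]; ring
        apply ih w hwW
        · intro h
          exact hwi (by rw [h]; rfl)
        · have hsubset : (Finset.univ.filter fun l => w l ≠ 0) ⊆
              (Finset.univ.filter fun l => v l ≠ 0).erase j := by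
            intro l hl
            simp only [Finset.mem_filter, Finset.mem_univ, true_and] at hl
            refine Finset.mem_erase.mpr ⟨?_, ?_⟩
            · intro h; subst h; exact hl hwj
            · simp only [Finset.mem_filter, Finset.mem_univ, true_and]
              intro h
              apply hl
              rw [hwl, h, mul_zero]
          have hjmem : j ∈ Finset.univ.filter fun l => v l ≠ 0 := by
            simp [hj]
          have := Finset.card_le_card hsubset
          rw [Finset.card_erase_of_mem hjmem] at this
          omega
  -- Y step on basis vectors
  have stepY : ∀ i : Fin N, (Pi.single i (1 : k) : Fin N → k) ∈ W →
      if h : (i : ℕ) + 1 < N then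
        (Pi.single (⟨(i : ℕ) + 1, h⟩ : Fin N) (1 : k) : Fin N → k) ∈ W
      else (Pi.single (⟨0, by omega⟩ : Fin N) (1 : k) : Fin N → k) ∈ W := by
    intro i hi
    have hYi := (hW _ hi).2
    rw [hY i] at hYi
    by_cases h : (i : ℕ) + 1 < N
    · rw [dif_pos h] at hYi
      rw [dif_pos h]
      exact hYi
    · rw [dif_neg h] at hYi
      rw [dif_neg h]
      have : (Pi.single (⟨0, by omega⟩ : Fin N) (1 : k) : Fin N → k) =
          b⁻¹ • (b • (Pi.single (⟨0, by omega⟩ : Fin N) (1 : k) : Fin N → k)) := by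
        rw [smul_smul, inv_mul_cancel₀ hb, one_smul]
      rw [this]
      exact W.smul_mem _ hYi
  -- get some basis vector in W
  obtain ⟨v, hv, hv0⟩ := Submodule.ne_bot_iff W |>.mp hWbot
  obtain ⟨i0, hi0⟩ := key (Finset.univ.filter fun l => v l ≠ 0).card v hv hv0 le_rfl
  -- e_0 ∈ W by walking down with Y
  have h0 : (Pi.single (⟨0, by omega⟩ : Fin N) (1 : k) : Fin N → k) ∈ W := by
    have down : ∀ m : ℕ, ∀ i : Fin N, N ≤ (i : ℕ) + m + 1 →
        (Pi.single i (1 : k) : Fin N → k) ∈ W →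
        (Pi.single (⟨0, by omega⟩ : Fin N) (1 : k) : Fin N → k) ∈ W := by
      intro m
      induction m with
      | zero =>
        intro i hiN hi
        have := stepY i hi
        rw [dif_neg (by omega)] at this
        exact this
      | succ m ih =>
        intro i hiN hi
        have := stepY i hi
        by_cases h : (i : ℕ) + 1 < N
        · rw [dif_pos h] at this
          exact ih ⟨(i : ℕ) + 1, h⟩ (by simp; omega) this
        · rw [dif_neg h] at this
          exact this
    exact down N i0 (by omega) hi0
  -- all basis vectors in W
  have hall : ∀ j : Fin N, (Pi.single j (1 : k) : Fin N → k) ∈ W := by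
    have aux : ∀ n : ℕ, ∀ j : Fin N, (j : ℕ) = n →
        (Pi.single j (1 : k) : Fin N → k) ∈ W := by
      intro n
      induction n with
      | zero =>
        intro j hj
        have : j = ⟨0, by omega⟩ := Fin.ext hj
        rw [this]
        exact h0
      | succ n ihn =>
        intro j hj
        have hn : n < N := by omega
        have hprev := ihn ⟨n, hn⟩ rfl
        have := stepY ⟨n, hn⟩ hprev
        rw [dif_pos (show n + 1 < N by omega)] at this
        have hje : j = ⟨n + 1, by omega⟩ := Fin.ext hj
        rw [hje]
        exact this
    intro j
    exact aux (j : ℕ) j rfl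
  -- conclude
  rw [eq_top_iff]
  intro v _
  have hv : v = ∑ i, v i • (Pi.single i (1 : k) : Fin N → k) := by
    conv_lhs => rw [← Finset.univ_sum_single v]
    refine Finset.sum_congr rfl fun i _ => ?_
    rw [← Pi.single_smul, smul_eq_mul, mul_one]
  rw [hv]
  exact Submodule.sum_mem W fun i _ => W.smul_mem _ (hall i)
end

section
/- Let q ∈ k^×, k of characteristic 0, and fix g ≥ 1. Suppose (λ_j)_{j∈ℕ} is a sequence in k, define λ_j^{(n+1)} := λ_j^{(n)} - q λ_{j+1}^{(n)} with λ_j^{(0)} := λ_j, and assume: (i) λ_j^{(g)} - q λ_{j+1}^{(g)} = 0 for all j, and (ii) λ_j^{(n)} λ_{j+n+1}^{(n+1)} - q λ_j^{(n+1)} λ_{j+n+2}^{(n)} = 0 for all j ∈ ℕ and all 0 ≤ n ≤ g-1. Then λ_j = q^{-j} λ_0 for all j ∈ ℕ. -/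
/-- The system `(S_g)`: if `λ^{(0)} = λ`, `λ_j^{(n+1)} = λ_j^{(n)} - q λ_{j+1}^{(n)}`,
and (i) `λ_j^{(g)} - q λ_{j+1}^{(g)} = 0` for all `j`, and
(ii) `λ_j^{(n)} λ_{j+n+1}^{(n+1)} - q λ_j^{(n+1)} λ_{j+n+2}^{(n)} = 0`
for all `j` and `0 ≤ n ≤ g-1`, then `λ_j = q^{-j} λ_0` for all `j`. -/
theorem stmt11 {k : Type*} [Field k] [CharZero k]
    (q : k) (hq : q ≠ 0) (g : ℕ) (hg : 1 ≤ g)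
    (lam : ℕ → k) (L : ℕ → ℕ → k)
    (hL0 : ∀ j, L 0 j = lam j)
    (hLs : ∀ n j, L (n + 1) j = L n j - q * L n (j + 1))
    (hi : ∀ j, L g j - q * L g (j + 1) = 0)
    (hii : ∀ n : ℕ, n ≤ g - 1 → ∀ j : ℕ,
      L n j * L (n + 1) (j + n + 1) - q * L (n + 1) j * L n (j + n + 2) = 0) :
    ∀ j : ℕ, lam j = q⁻¹ ^ j * lam 0 := by
  -- Step: if level m+2 vanishes, then level m+1 vanishes (for m+1 ≤ g).
  have step : ∀ m : ℕ, m + 1 ≤ g → (∀ j, L (m + 2) j = 0) → ∀ j, L (m + 1) j = 0 := by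
    intro m hm h1
    have hν : ∀ j, L (m + 1) j = q * L (m + 1) (j + 1) := by
      intro j
      have h := hLs (m + 1) j
      rw [h1 j] at h
      linear_combination -h
    have hpow : ∀ i j, L (m + 1) j = q ^ i * L (m + 1) (j + i) := by
      intro i
      induction i with
      | zero => intro j; simp
      | succ i ih =>
        intro j
        rw [ih j, hν (j + i)]
        rw [show j + (i + 1) = j + i + 1 from by omega]
        ring
    have hT : ∀ i j, L m j - q ^ i * L m (j + i) = (i : k) * L (m + 1) j := by
      intro i
      induction i with
      | zero => intro j; simp
      | succ i ih =>
        intro j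
        have h2 := hLs m (j + i)
        have h3 := hpow i j
        have h4 := ih j
        rw [show j + (i + 1) = j + i + 1 from by omega]
        push_cast
        linear_combination h4 - (q ^ i) * h2 - h3
    intro j
    have eq1 := hii m (by omega) j
    have hpj := hpow (m + 1) j
    rw [show j + (m + 1) = j + m + 1 from by omega] at hpj
    have hTj := hT (m + 2) j
    rw [show j + (m + 2) = j + m + 2 from by omega] at hTj
    have key : ((m : k) + 2) * (L (m + 1) j) ^ 2 = 0 := by
      push_cast at hTj
      linear_combination (-(L (m + 1) j)) * hTj + (q ^ (m + 1)) * eq1 + (L m j) * hpj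
    have hm2 : ((m : k) + 2) ≠ 0 := by
      have : ((m + 2 : ℕ) : k) ≠ 0 := Nat.cast_ne_zero.mpr (by omega)
      push_cast at this
      exact this
    have hsq : (L (m + 1) j) ^ 2 = 0 := by
      rcases mul_eq_zero.mp key with h | h
      · exact absurd h hm2
      · exact h
    exact pow_eq_zero_iff (by norm_num) |>.mp hsq
  -- Downward induction: L (g+1-d) ≡ 0 for d ≤ g.
  have hz : ∀ d : ℕ, d ≤ g → ∀ j, L (g + 1 - d) j = 0 := by
    intro d
    induction d with
    | zero =>
      intro _ j
      have h := hLs g j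
      rw [show g + 1 - 0 = g + 1 from by omega, h, hi j]
    | succ d ih =>
      intro hd j
      have e1 : g + 1 - d = (g - d - 1) + 2 := by omega
      have e2 : g + 1 - (d + 1) = (g - d - 1) + 1 := by omega
      rw [e2]
      exact step (g - d - 1) (by omega) (fun j => by rw [← e1]; exact ih (by omega) j) j
  have h1 : ∀ j, L 1 j = 0 := by
    intro j
    have := hz g le_rfl j
    rwa [show g + 1 - g = 1 from by omega] at this
  have hlam : ∀ j, lam j = q * lam (j + 1) := by
    intro j
    have h := hLs 0 j
    rw [h1 j, hL0 j, hL0 (j + 1)] at h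
    linear_combination -h
  intro j
  induction j with
  | zero => simp
  | succ j ih =>
    have : lam (j + 1) = q⁻¹ * lam j := by
      rw [hlam j]
      field_simp
    rw [this, ih, pow_succ]
    ring
end

section
/- Let V = ⊕_{i≥0} k v_i be a point module over B(L_q(1,g)) with x_1 v_i = a_i v_{i+1}, x_2 v_i = b_i v_{i+1}, z_0 v_i = c_i v_{i+1}. Then a_0 = 0 if and only if a_i = 0 for some i, if and only if a_i = 0 for all i ∈ ℕ. -/
/-- Coordinate data of a point module `V = ⊕ k v_i` over the Laistrygonian
Nichols algebra `B(L_q(1,g))`: the degree-one generators act by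
`x₁ v_i = a_i v_{i+1}`, `x₂ v_i = b_i v_{i+1}`, `z₀ v_i = c_i v_{i+1}`, and
`z_n v_i = ζ_i^{(n)} v_{i+n+1}` where `ζ` is determined recursively by the
relations `z_{n+1} = x₂ z_n - q z_n x₂`. The fields record that all defining
relations of `B(L_q(1,g))` annihilate each `v_i`, and cyclicity (each graded
piece being one-dimensional and generated from degree 0) amounts to
`(a_i, b_i, c_i) ≠ (0,0,0)` for all `i`. -/
structure LPointModule (k : Type*) [Field k] (q : k) (g : ℕ) where
  a : ℕ → k
  b : ℕ → k
  c : ℕ → k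
  zeta : ℕ → ℕ → k
  hzeta0 : ∀ i, zeta 0 i = c i
  hzetas : ∀ n i, zeta (n + 1) i = b (i + n + 1) * zeta n i - q * b i * zeta n (i + 1)
  jordan : ∀ i, a i * b (i + 1) - a (i + 1) * b i + (1 / 2 : k) * (a i * a (i + 1)) = 0
  x1z0 : ∀ i, a (i + 1) * c i - q * a i * c (i + 1) = 0
  zz : ∀ n i, n < g →
    zeta (n + 1) i * zeta n (i + n + 2) -
      q⁻¹ * (zeta n i * zeta (n + 1) (i + n + 1)) = 0
  x2zg : ∀ i, b (i + g + 1) * zeta g i - q * b i * zeta g (i + 1) = 0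
  cyclic : ∀ i, ¬(a i = 0 ∧ b i = 0 ∧ c i = 0)

/-- For a point module over `B(L_q(1,g))` with coordinates `(a_i : b_i : c_i)`:
`a_0 = 0` iff `a_i = 0` for some `i`, iff `a_i = 0` for all `i`. -/
theorem stmt14 {k : Type*} [Field k] [CharZero k]
    (q : k) (hq : q ≠ 0) (g : ℕ) (hg : 1 ≤ g)
    (M : LPointModule k q g) :
    (M.a 0 = 0 ↔ ∃ i : ℕ, M.a i = 0) ∧ (M.a 0 = 0 ↔ ∀ i : ℕ, M.a i = 0) := by
  have up : ∀ i, M.a i = 0 → M.a (i + 1) = 0 := by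
    intro i h
    by_contra hne
    have hj := M.jordan i
    have hz := M.x1z0 i
    rw [h] at hj hz
    have hb : M.b i = 0 := by
      have : M.a (i + 1) * M.b i = 0 := by linear_combination -hj
      rcases mul_eq_zero.mp this with h' | h' <;> [exact absurd h' hne; exact h']
    have hc : M.c i = 0 := by
      have : M.a (i + 1) * M.c i = 0 := by linear_combination hz
      rcases mul_eq_zero.mp this with h' | h' <;> [exact absurd h' hne; exact h']
    exact M.cyclic i ⟨h, hb, hc⟩
  have down : ∀ i, M.a (i + 1) = 0 → M.a i = 0 := by
    intro i h
    by_contra hne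
    have hj := M.jordan i
    have hz := M.x1z0 i
    rw [h] at hj hz
    have hb : M.b (i + 1) = 0 := by
      have : M.a i * M.b (i + 1) = 0 := by linear_combination hj
      rcases mul_eq_zero.mp this with h' | h' <;> [exact absurd h' hne; exact h']
    have hc : M.c (i + 1) = 0 := by
      have : q * (M.a i * M.c (i + 1)) = 0 := by linear_combination -hz
      have := (mul_eq_zero.mp this).resolve_left hq
      rcases mul_eq_zero.mp this with h' | h' <;> [exact absurd h' hne; exact h']
    exact M.cyclic (i + 1) ⟨h, hb, hc⟩
  have all : M.a 0 = 0 → ∀ i, M.a i = 0 := by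
    intro h i
    induction i with
    | zero => exact h
    | succ n ih => exact up n ih
  have toZero : ∀ i, M.a i = 0 → M.a 0 = 0 := by
    intro i
    induction i with
    | zero => exact id
    | succ n ih => exact fun h => ih (down n h)
  exact ⟨⟨fun h => ⟨0, h⟩, fun ⟨i, h⟩ => toZero i h⟩,
    ⟨all, fun h => h 0⟩⟩
end

section
/- Let V be a point module over B(L_q(1,g)) with coordinates (a_i : b_i : c_i) as above. If a_0 ≠ 0, then for all i ∈ ℕ the point P_i equals (1 : b_0/a_0 - i/2 : 0); in particular c_i = 0 for all i. -/
/-- If `a_0 ≠ 0` for a point module over `B(L_q(1,g))`, then for all `i` the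
point `P_i = (a_i : b_i : c_i)` equals `(1 : b_0/a_0 - i/2 : 0)`; i.e. `a_i ≠ 0`,
`c_i = 0` and `b_i/a_i = b_0/a_0 - i/2`. -/
theorem stmt15 {k : Type*} [Field k] [CharZero k]
    (q : k) (hq : q ≠ 0) (g : ℕ) (hg : 1 ≤ g)
    (M : LPointModule k q g) (ha0 : M.a 0 ≠ 0) :
    ∀ i : ℕ, M.a i ≠ 0 ∧ M.c i = 0 ∧
      M.a 0 * M.b i = M.a i * M.b 0 - ((i : k) / 2) * (M.a i * M.a 0) := by

  -- Step 1: all `a i` are nonzero.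
  have ha : ∀ i, M.a i ≠ 0 := by
    intro i
    induction i with
    | zero => exact ha0
    | succ i ih =>
      intro h
      have hj := M.jordan i
      rw [h] at hj
      have hb1 : M.b (i + 1) = 0 := by
        have h0 : M.a i * M.b (i + 1) = 0 := by linear_combination hj
        rcases mul_eq_zero.mp h0 with h' | h'
        · exact absurd h' ih
        · exact h'
      have hx := M.x1z0 i
      rw [h] at hx
      have hc1 : M.c (i + 1) = 0 := by
        have h0 : q * (M.a i * M.c (i + 1)) = 0 := by linear_combination -hx
        rcases mul_eq_zero.mp h0 with h' | h'
        · exact absurd h' hq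
        · rcases mul_eq_zero.mp h' with h'' | h''
          · exact absurd h'' ih
          · exact h''
      exact M.cyclic (i + 1) ⟨h, hb1, hc1⟩
  -- Step 2: the `b` relation.
  have hB : ∀ i : ℕ, M.a 0 * M.b i = M.a i * M.b 0 - ((i : k) / 2) * (M.a i * M.a 0) := by
    intro i
    induction i with
    | zero => push_cast; ring
    | succ i ih =>
      have hj := M.jordan i
      apply mul_left_cancel₀ (ha i)
      push_cast
      linear_combination M.a 0 * hj + M.a (i + 1) * ih
  -- difference form of the b relation
  have hd : ∀ i n : ℕ, M.a i * M.b (i + n + 1) =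
      M.b i * M.a (i + n + 1) - (((n : k) + 1) / 2) * (M.a i * M.a (i + n + 1)) := by
    intro i n
    apply mul_left_cancel₀ ha0
    have h1 := hB (i + n + 1)
    have h2 := hB i
    push_cast at h1 h2 ⊢
    linear_combination M.a i * h1 - M.a (i + n + 1) * h2
  -- Step 3: closed form for zeta.
  have hz : ∀ n i, M.zeta n i =
      M.c i * (-(1 : k) / 2) ^ n * (Nat.factorial n : k) * ∏ j ∈ Finset.range n, M.a (i + 1 + j) := by
    intro n
    induction n with
    | zero => intro i; simp [M.hzeta0]
    | succ n ih =>
      intro i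
      have h1 := M.hzetas n i
      have h2 := ih i
      have h3 := ih (i + 1)
      have hc := M.x1z0 i
      have hdd := hd i n
      have hPe : (∏ j ∈ Finset.range n, M.a (i + 1 + j)) * M.a (i + n + 1)
          = M.a (i + 1) * ∏ j ∈ Finset.range n, M.a (i + 1 + 1 + j) := by
        rw [show i + n + 1 = i + 1 + n from by omega, ← Finset.prod_range_succ,
          Finset.prod_range_succ', mul_comm]
        congr 1
        · exact Finset.prod_congr rfl fun j _ => by congr 1; omega
      rw [h1, h2, h3, Finset.prod_range_succ, pow_succ,
        show i + 1 + n = i + n + 1 from by omega]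
      apply mul_left_cancel₀ (ha i)
      push_cast [Nat.factorial_succ]
      linear_combination
        (M.c i * (-(1 : k) / 2) ^ n * (Nat.factorial n : k) * (∏ j ∈ Finset.range n, M.a (i + 1 + j))) * hdd
        + (M.b i * (-(1 : k) / 2) ^ n * (Nat.factorial n : k) * (∏ j ∈ Finset.range n, M.a (i + 1 + 1 + j))) * hc
        + (M.b i * M.c i * (-(1 : k) / 2) ^ n * (Nat.factorial n : k)) * hPe
  -- Step 4: c 0 = 0.
  have hc0 : M.c 0 = 0 := by
    have hx := M.x2zg 0
    rw [hz g 0, hz g 1] at hx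
    have hc := M.x1z0 0
    have hdd := hd 0 g
    have hPe : (∏ j ∈ Finset.range g, M.a (0 + 1 + j)) * M.a (0 + g + 1)
        = M.a (0 + 1) * ∏ j ∈ Finset.range g, M.a (0 + 1 + 1 + j) := by
      rw [show 0 + g + 1 = 0 + 1 + g from by omega, ← Finset.prod_range_succ,
        Finset.prod_range_succ', mul_comm]
      congr 1
      · exact Finset.prod_congr rfl fun j _ => by congr 1; omega
    have key : M.c 0 * ((((g : k) + 1) / 2) * ((-(1 : k) / 2) ^ g * (Nat.factorial g : k) *
        (∏ j ∈ Finset.range g, M.a (0 + 1 + j)) * (M.a 0 * M.a (0 + g + 1)))) = 0 := by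
      linear_combination (-(M.a 0)) * hx
        + (M.c 0 * (-(1 : k) / 2) ^ g * (Nat.factorial g : k) * (∏ j ∈ Finset.range g, M.a (0 + 1 + j))) * hdd
        + (M.b 0 * (-(1 : k) / 2) ^ g * (Nat.factorial g : k) * (∏ j ∈ Finset.range g, M.a (0 + 1 + 1 + j))) * hc
        + (M.b 0 * M.c 0 * (-(1 : k) / 2) ^ g * (Nat.factorial g : k)) * hPe
    have hX : ((((g : k) + 1) / 2) * ((-(1 : k) / 2) ^ g * (Nat.factorial g : k) *
        (∏ j ∈ Finset.range g, M.a (0 + 1 + j)) * (M.a 0 * M.a (0 + g + 1)))) ≠ 0 := by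
      apply mul_ne_zero
      · exact div_ne_zero (Nat.cast_add_one_ne_zero g) two_ne_zero
      · apply mul_ne_zero
        apply mul_ne_zero
        apply mul_ne_zero
        · apply pow_ne_zero; norm_num
        · exact_mod_cast Nat.cast_ne_zero.mpr (Nat.factorial_ne_zero g)
        · exact Finset.prod_ne_zero_iff.mpr fun j _ => ha _
        · exact mul_ne_zero (ha 0) (ha _)
      
    rcases mul_eq_zero.mp key with h' | h'
    · exact h'
    · exact absurd h' hX
  -- Step 5: all c i = 0.
  have hcA : ∀ i, M.c i = 0 := by
    intro i
    induction i with
    | zero => exact hc0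
    | succ i ih =>
      have hx := M.x1z0 i
      rw [ih] at hx
      have h0 : q * (M.a i * M.c (i + 1)) = 0 := by linear_combination -hx
      rcases mul_eq_zero.mp h0 with h' | h'
      · exact absurd h' hq
      · rcases mul_eq_zero.mp h' with h'' | h''
        · exact absurd h'' (ha i)
        · exact h''
  exact fun i => ⟨ha i, hcA i, hB i⟩
end

section
/- Let V be a point module over B(L_q(1,g)) with coordinates (a_i : b_i : c_i). If a_0 = 0 and b_j ≠ 0 for all j ∈ ℕ, then P_j = (0 : 1 : q^{-j} c_0/b_0) for all j ∈ ℕ. -/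
section Aux

variable {k : Type*} [Field k]

/-- `lpMu q b c n i` is `μ_n(i)`, the "normalized" zeta coefficient. -/
def lpMu (q : k) (b c : ℕ → k) : ℕ → ℕ → k
  | 0, i => c i / b i
  | n+1, i => lpMu q b c n i - q * lpMu q b c n (i+1)

/-- `lpB b n i = b i * b (i+1) * ... * b (i+n)`. -/
def lpB (b : ℕ → k) : ℕ → ℕ → k
  | 0, i => b i
  | n+1, i => lpB b n i * b (i+n+1)

lemma lpB_ne {b : ℕ → k} (hb : ∀ j, b j ≠ 0) : ∀ n i, lpB b n i ≠ 0 := by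
  intro n
  induction n with
  | zero => intro i; exact hb i
  | succ n ih => intro i; exact mul_ne_zero (ih i) (hb _)

lemma lpB_succ' (b : ℕ → k) : ∀ n i, lpB b (n+1) i = b i * lpB b n (i+1) := by
  intro n
  induction n with
  | zero => intro i; rfl
  | succ n ih =>
      intro i
      show lpB b (n+1) i * b (i+n+2) = b i * (lpB b n (i+1) * b ((i+1)+n+1))
      rw [ih i, show (i+1)+n+1 = i+n+2 from by omega]
      ring

end Aux

section Key

variable {k : Type*} [Field k] [CharZero k]

/-- Key step: if `F = (1 - q S) f` satisfies `F i = q F (i+1)` together with the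
quadratic relation coming from `z_n z_{n+1} = q⁻¹ z_{n+1} z_n`, then `F ≡ 0`. -/
lemma lpKey {q : k} (hq : q ≠ 0) (n : ℕ) (f F : ℕ → k)
    (hF : ∀ i, F i = f i - q * f (i+1))
    (H : ∀ i, F i = q * F (i+1))
    (hzz : ∀ i, F i * f (i+n+2) = q⁻¹ * (f i * F (i+n+1))) :
    ∀ i, F i = 0 := by
  have hiter : ∀ i j, F i = q ^ j * F (i + j) := by
    intro i j
    induction j with
    | zero => simp
    | succ j ih =>
        rw [ih, H (i+j)]
        ring_nf
  by_cases h0 : F 0 = 0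
  · intro i
    have h := hiter 0 i
    rw [h0, zero_add] at h
    exact ((mul_eq_zero.mp h.symm).resolve_left (pow_ne_zero _ hq))
  · exfalso
    have hFne : ∀ i, F i ≠ 0 := by
      intro i h
      exact h0 (by rw [hiter 0 i, zero_add, h, mul_zero])
    have hfshift : ∀ i, q ^ (n+2) * f (i+n+2) = f i := by
      intro i
      have h1 := hzz i
      have h1' : q * (F i * f (i+n+2)) = f i * F (i+n+1) := by
        rw [h1]; field_simp
      have h2 : F i = q^(n+1) * F (i+n+1) := hiter i (n+1)
      apply mul_left_cancel₀ (hFne i)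
      linear_combination q^(n+1) * h1' - f i * h2
    have he2 : ∀ i, q^i * f i + q^(i+2) * f (i+2) = 2 * (q^(i+1) * f (i+1)) := by
      intro i
      have h1 := hF i
      have h2 := hF (i+1)
      have h3 := H i
      linear_combination q^i * h3 - q^i * h1 + q^(i+1) * h2
    have hd : ∀ i, q^(i+1) * f (i+1) - q^i * f i = q * f 1 - f 0 := by
      intro i
      induction i with
      | zero => ring_nf
      | succ i ih => linear_combination he2 i + ih
    have hsum : ∀ i : ℕ, q^i * f i = f 0 + (i : k) * (q * f 1 - f 0) := by
      intro i
      induction i with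
      | zero => simp
      | succ i ih =>
          push_cast
          linear_combination hd i + ih
    have hper := hfshift 0
    rw [Nat.zero_add] at hper
    have hd0 : q * f 1 - f 0 = 0 := by
      have h1 := hsum (n+2)
      have h2 : ((n:k)+2) * (q * f 1 - f 0) = 0 := by
        push_cast at h1
        linear_combination hper - h1
      have hn2 : ((n:k)+2) ≠ 0 := by
        have h3 : ((n+2:ℕ):k) ≠ 0 := Nat.cast_ne_zero.mpr (by omega)
        push_cast at h3
        exact h3
      exact (mul_eq_zero.mp h2).resolve_left hn2
    exact h0 (by rw [hF 0]; linear_combination -hd0)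

end Key

section Mod

set_option linter.unusedSectionVars false

variable {k : Type*} [Field k] [CharZero k] {q : k} {g : ℕ}

omit [CharZero k] in
lemma lp_zeta_eq (M : LPointModule k q g) (hb : ∀ j, M.b j ≠ 0) :
    ∀ n i, M.zeta n i = lpB M.b n i * lpMu q M.b M.c n i := by
  intro n
  induction n with
  | zero =>
      intro i
      rw [M.hzeta0 i]
      show M.c i = M.b i * (M.c i / M.b i)
      rw [mul_comm, div_mul_cancel₀ _ (hb i)]
  | succ n ih =>
      intro i
      rw [M.hzetas n i, ih i, ih (i+1)]
      have h1 : lpB M.b (n+1) i = lpB M.b n i * M.b (i+n+1) := rfl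
      have h2 : lpB M.b (n+1) i = M.b i * lpB M.b n (i+1) := lpB_succ' M.b n i
      show _ = lpB M.b (n+1) i * (lpMu q M.b M.c n i - q * lpMu q M.b M.c n (i+1))
      linear_combination (-(lpMu q M.b M.c n i)) * h1 + (q * lpMu q M.b M.c n (i+1)) * h2

lemma lp_Hg (M : LPointModule k q g) (hb : ∀ j, M.b j ≠ 0) :
    ∀ i, lpMu q M.b M.c g i = q * lpMu q M.b M.c g (i+1) := by
  intro i
  have hx := M.x2zg i
  rw [lp_zeta_eq M hb g i, lp_zeta_eq M hb g (i+1)] at hx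
  have h3 : lpB M.b g i * M.b (i+g+1) = M.b i * lpB M.b g (i+1) := by
    rw [show lpB M.b g i * M.b (i+g+1) = lpB M.b (g+1) i from rfl, lpB_succ']
  apply mul_left_cancel₀ (mul_ne_zero (hb i) (lpB_ne hb g (i+1)))
  linear_combination hx - lpMu q M.b M.c g i * h3

lemma lp_zzmu (M : LPointModule k q g) (hb : ∀ j, M.b j ≠ 0) :
    ∀ n i, n < g →
      lpMu q M.b M.c (n+1) i * lpMu q M.b M.c n (i+n+2) =
        q⁻¹ * (lpMu q M.b M.c n i * lpMu q M.b M.c (n+1) (i+n+1)) := by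
  intro n i hn
  have hx := M.zz n i hn
  rw [lp_zeta_eq M hb (n+1) i, lp_zeta_eq M hb n (i+n+2), lp_zeta_eq M hb n i,
    lp_zeta_eq M hb (n+1) (i+n+1)] at hx
  have hid : lpB M.b (n+1) i * lpB M.b n (i+n+2) =
      lpB M.b n i * lpB M.b (n+1) (i+n+1) := by
    rw [show lpB M.b (n+1) i = lpB M.b n i * M.b (i+n+1) from rfl,
      show lpB M.b (n+1) (i+n+1) = M.b (i+n+1) * lpB M.b n (i+n+2) from lpB_succ' M.b n (i+n+1)]
    ring
  apply mul_left_cancel₀ (mul_ne_zero (lpB_ne hb (n+1) i) (lpB_ne hb n (i+n+2)))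
  linear_combination hx - q⁻¹ * lpMu q M.b M.c n i * lpMu q M.b M.c (n+1) (i+n+1) * hid

lemma lp_mu_zero (hq : q ≠ 0) (M : LPointModule k q g) (hb : ∀ j, M.b j ≠ 0) :
    ∀ t n, n + 1 + t = g → ∀ i, lpMu q M.b M.c (n+1) i = 0 := by
  intro t
  induction t with
  | zero =>
      intro n h i
      have hg' : n + 1 = g := by omega
      subst hg'
      refine lpKey hq n (lpMu q M.b M.c n) (lpMu q M.b M.c (n+1)) (fun i => rfl)
        (lp_Hg M hb) (fun i => lp_zzmu M hb n i (by omega)) i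
  | succ t ih =>
      intro n h i
      have h2 : ∀ i, lpMu q M.b M.c (n+2) i = 0 := ih (n+1) (by omega)
      have H : ∀ i, lpMu q M.b M.c (n+1) i = q * lpMu q M.b M.c (n+1) (i+1) := by
        intro i
        have := h2 i
        show lpMu q M.b M.c (n+1) i = _
        have hdef : lpMu q M.b M.c (n+2) i =
            lpMu q M.b M.c (n+1) i - q * lpMu q M.b M.c (n+1) (i+1) := rfl
        rw [hdef] at this
        linear_combination this
      refine lpKey hq n (lpMu q M.b M.c n) (lpMu q M.b M.c (n+1)) (fun i => rfl)
        H (fun i => lp_zzmu M hb n i (by omega)) i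

end Mod

/-- If `a_0 = 0` and `b_j ≠ 0` for all `j` in a point module over `B(L_q(1,g))`,
then `P_j = (0 : 1 : q^{-j} c_0/b_0)` for all `j`; i.e. `a_j = 0` and
`c_j/b_j = q^{-j} c_0/b_0`. -/
theorem stmt16 {k : Type*} [Field k] [CharZero k]
    (q : k) (hq : q ≠ 0) (g : ℕ) (hg : 1 ≤ g)
    (M : LPointModule k q g) (ha0 : M.a 0 = 0) (hb : ∀ j : ℕ, M.b j ≠ 0) :
    ∀ j : ℕ, M.a j = 0 ∧ q ^ j * (M.c j * M.b 0) = M.c 0 * M.b j := by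
  have ha : ∀ j, M.a j = 0 := by
    intro j
    induction j with
    | zero => exact ha0
    | succ j ih =>
        have hj := M.jordan j
        rw [ih] at hj
        have : M.a (j+1) * M.b j = 0 := by linear_combination -hj
        exact ((mul_eq_zero.mp this).resolve_right (hb j))
  have hmu1 : ∀ i, lpMu q M.b M.c 1 i = 0 := by
    have := lp_mu_zero hq M hb (g-1) 0 (by omega)
    exact this
  have hrel : ∀ i, M.c i * M.b (i+1) = q * (M.c (i+1) * M.b i) := by
    intro i
    have h := hmu1 i
    have hdef : lpMu q M.b M.c 1 i = M.c i / M.b i - q * (M.c (i+1) / M.b (i+1)) := rfl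
    rw [hdef] at h
    field_simp [hb i, hb (i+1)] at h
    linear_combination h
  intro j
  refine ⟨ha j, ?_⟩
  induction j with
  | zero => norm_num
  | succ j ih =>
      apply mul_left_cancel₀ (hb j)
      have hr := hrel j
      linear_combination M.b (j+1) * ih - q^j * M.b 0 * hr
end

section
/- Let V be a point module over B(L_q(1,g)) with coordinates (a_i : b_i : c_i). If a_0 = 0 and b_i = 0 for some i ∈ ℕ, then b_j = 0 for all j ∈ ℕ, hence P_j = (0 : 0 : 1) for all j. -/
namespace LPointModule

variable {k : Type*} [Field k] {q : k} {g : ℕ}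

theorem azero (M : LPointModule k q g) (ha0 : M.a 0 = 0) : ∀ j, M.a j = 0 := by
  intro j
  induction j with
  | zero => exact ha0
  | succ n ih =>
    have h1 := M.jordan n
    have h2 := M.x1z0 n
    have h1' : M.a (n+1) * M.b n = 0 := by rw [ih] at h1; linear_combination -h1
    have h2' : M.a (n+1) * M.c n = 0 := by rw [ih] at h2; linear_combination h2
    rcases mul_eq_zero.mp h1' with h | hb
    · exact h
    rcases mul_eq_zero.mp h2' with h | hc
    · exact h
    exact absurd ⟨ih, hb, hc⟩ (M.cyclic n)

theorem cne (M : LPointModule k q g) (ha0 : M.a 0 = 0) {j : ℕ} (hbj : M.b j = 0) :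
    M.c j ≠ 0 := fun hcj => M.cyclic j ⟨M.azero ha0 j, hbj, hcj⟩

theorem S0 (M : LPointModule k q g) {i : ℕ} (hb : M.b i = 0) :
    ∀ n, M.zeta n i = M.c i * ∏ h ∈ Finset.range n, M.b (i+1+h) := by
  intro n
  induction n with
  | zero => simp [M.hzeta0]
  | succ n ih =>
    rw [M.hzetas n i, ih, hb, Finset.prod_range_succ,
        show i + n + 1 = i + 1 + n from by omega]
    ring

theorem S1 (M : LPointModule k q g) {i : ℕ} (hb : M.b (i+1) = 0) :
    ∀ n, M.zeta (n+1) i =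
      -((n+1 : ℕ) : k) * q * M.b i * M.c (i+1) * ∏ h ∈ Finset.range n, M.b (i+2+h) := by
  intro n
  induction n with
  | zero =>
    rw [M.hzetas 0 i, M.hzeta0, M.hzeta0, show i + 0 + 1 = i + 1 from by omega, hb]
    push_cast; ring
  | succ n ih =>
    rw [M.hzetas (n+1) i, ih, M.S0 hb (n+1)]
    simp only [Finset.prod_range_succ, show i+1+1 = i+2 from by omega,
      show i + (n+1) + 1 = i + 2 + n from by omega]
    push_cast; ring

theorem key [CharZero k] (M : LPointModule k q g) (hq : q ≠ 0) (ha0 : M.a 0 = 0)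
    {e m : ℕ} (he : e + 2 ≤ g + 1)
    (hm : M.b m = 0) (hd : M.b (m + e + 2) = 0)
    (hbet : ∀ j, 0 < j → j < e + 2 → M.b (m + j) ≠ 0) :
    ∃ h < e, M.b (m + e + 3 + h) = 0 := by
  have hzz := M.zz e m (by omega)
  rw [M.S0 hm (e+1), M.S0 hm e,
      M.S0 (show M.b (m + e + 2) = 0 from hd) e,
      M.S1 (show M.b (m + e + 1 + 1) = 0 from by rw [show m+e+1+1 = m+e+2 from by omega]; exact hd) e]
    at hzz
  simp only [show m+e+2+1 = m+e+3 from by omega, show m+e+1+2 = m+e+3 from by omega,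
    Finset.prod_range_succ, show m+1+e = m+e+1 from by omega] at hzz
  set P := ∏ h ∈ Finset.range e, M.b (m+1+h) with hP
  set Q := ∏ h ∈ Finset.range e, M.b (m+e+3+h) with hQdef
  have hc1 : M.c m ≠ 0 := M.cne ha0 hm
  have hc2 : M.c (m+e+2) ≠ 0 := M.cne ha0 hd
  have hβ : M.b (m+e+1) ≠ 0 := by
    have := hbet (e+1) (by omega) (by omega)
    rwa [show m+(e+1) = m+e+1 from by omega] at this
  have hPne : P ≠ 0 := by
    rw [hP]
    apply Finset.prod_ne_zero_iff.mpr
    intro h hh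
    have := hbet (h+1) (by omega) (by simp at hh; omega)
    rwa [show m+(h+1) = m+1+h from by omega] at this
  have hqq : q * q⁻¹ = 1 := mul_inv_cancel₀ hq
  have hmain : ((e:k)+2) * (M.c m * M.c (m+e+2) * M.b (m+e+1) * P * Q) = 0 := by
    linear_combination (norm := (push_cast; ring1)) hzz -
      (((e:k)+1) * (M.c m * M.b (m+e+1) * M.c (m+e+2) * P * Q)) * hqq
  have hQ : Q = 0 := by
    have h1 : ((e:k)+2) ≠ 0 := by have : ((e+2:ℕ):k) ≠ 0 := Nat.cast_ne_zero.mpr (by omega); push_cast at this; convert this using 2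
    have := mul_eq_zero.mp hmain
    rcases this with h | h
    · exact absurd h h1
    rcases mul_eq_zero.mp h with h | h
    · rcases mul_eq_zero.mp h with h | h
      · rcases mul_eq_zero.mp h with h | h
        · rcases mul_eq_zero.mp h with h | h
          · exact absurd h hc1
          · exact absurd h hc2
        · exact absurd h hβ
      · exact absurd h hPne
    · exact h
  rw [hQdef] at hQ
  obtain ⟨h, hh, hz⟩ := Finset.prod_eq_zero_iff.mp hQ
  exact ⟨h, by simpa using hh, hz⟩

theorem next (M : LPointModule k q g) (ha0 : M.a 0 = 0)
    {i : ℕ} (hbi : M.b i = 0) : ∃ d, 0 < d ∧ d ≤ g + 1 ∧ M.b (i + d) = 0 := by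
  have h := M.x2zg i
  rw [hbi, M.S0 hbi g] at h
  have h' : M.c i * (M.b (i+g+1) * ∏ h ∈ Finset.range g, M.b (i+1+h)) = 0 := by
    linear_combination h
  rcases mul_eq_zero.mp h' with h0 | h0
  · exact absurd h0 (M.cne ha0 hbi)
  rcases mul_eq_zero.mp h0 with h0 | h0
  · exact ⟨g+1, by omega, by omega, by rwa [show i+(g+1) = i+g+1 from by omega]⟩
  · obtain ⟨t, ht, hz⟩ := Finset.prod_eq_zero_iff.mp h0
    simp only [Finset.mem_range] at ht
    exact ⟨t+1, by omega, by omega, by rwa [show i+(t+1) = i+1+t from by omega]⟩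

theorem fwd (M : LPointModule k q g) (hq : q ≠ 0) (hg : 1 ≤ g) (ha0 : M.a 0 = 0)
    {j : ℕ} (h1 : M.b j = 0) (h2 : M.b (j+1) = 0) : M.b (j+2) = 0 := by
  have h := M.zz 0 j (by omega)
  rw [M.hzetas 0 j, M.hzetas 0 (j+1)] at h
  simp only [M.hzeta0] at h
  simp only [show j+0+1 = j+1 from by omega, show j+0+2 = j+2 from by omega,
    show j+1+0+1 = j+2 from by omega, show j+1+1 = j+2 from by omega] at h
  rw [h1, h2] at h
  have h' : q⁻¹ * (M.c j * (M.c (j+1) * M.b (j+2))) = 0 := by linear_combination -h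
  rcases mul_eq_zero.mp h' with h0 | h0
  · exact absurd h0 (inv_ne_zero hq)
  rcases mul_eq_zero.mp h0 with h0 | h0
  · exact absurd h0 (M.cne ha0 h1)
  rcases mul_eq_zero.mp h0 with h0 | h0
  · exact absurd h0 (M.cne ha0 h2)
  · exact h0

theorem bwd (M : LPointModule k q g) (hq : q ≠ 0) (hg : 1 ≤ g) (ha0 : M.a 0 = 0)
    {j : ℕ} (h1 : M.b (j+1) = 0) (h2 : M.b (j+2) = 0) : M.b j = 0 := by
  have h := M.zz 0 j (by omega)
  rw [M.hzetas 0 j, M.hzetas 0 (j+1)] at h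
  simp only [M.hzeta0] at h
  simp only [show j+0+1 = j+1 from by omega, show j+0+2 = j+2 from by omega,
    show j+1+0+1 = j+2 from by omega, show j+1+1 = j+2 from by omega] at h
  rw [h1, h2] at h
  have h' : q * (M.c (j+1) * (M.c (j+2) * M.b j)) = 0 := by linear_combination -h
  rcases mul_eq_zero.mp h' with h0 | h0
  · exact absurd h0 hq
  rcases mul_eq_zero.mp h0 with h0 | h0
  · exact absurd h0 (M.cne ha0 h1)
  rcases mul_eq_zero.mp h0 with h0 | h0
  · exact absurd h0 (M.cne ha0 h2)
  · exact h0

theorem adjPair [CharZero k] (M : LPointModule k q g) (hq : q ≠ 0) (ha0 : M.a 0 = 0) :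
    ∀ d m, 0 < d → d ≤ g + 1 → M.b m = 0 → M.b (m + d) = 0 →
      (∀ j, 0 < j → j < d → M.b (m + j) ≠ 0) →
      ∃ p, M.b p = 0 ∧ M.b (p+1) = 0 := by
  intro d
  induction d using Nat.strong_induction_on with
  | _ d ih =>
    intro m hd0 hdg hm hmd hbet
    match d, hd0 with
    | 1, _ => exact ⟨m, hm, hmd⟩
    | (e+2), _ =>
      have hd' : M.b (m + e + 2) = 0 := by rwa [show m+e+2 = m+(e+2) from by omega]
      obtain ⟨h, hh, hz⟩ := M.key hq ha0 hdg hm hd' hbet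
      have hex : ∃ t, 0 < t ∧ M.b (m + (e+2) + t) = 0 :=
        ⟨h+1, by omega, by rwa [show m+(e+2)+(h+1) = m+e+3+h from by omega]⟩
      classical
      let d' := Nat.find hex
      obtain ⟨hd'0, hd'z⟩ := Nat.find_spec hex
      have hd'le : d' ≤ h + 1 := Nat.find_le ⟨by omega, by rwa [show m+(e+2)+(h+1) = m+e+3+h from by omega]⟩
      refine ih d' (by omega) (m + (e+2)) hd'0 (by omega) (by rwa [show m+e+2 = m+(e+2) from by omega] at hd') hd'z ?_
      intro j hj0 hjd
      intro hbz
      exact Nat.find_min hex hjd ⟨hj0, hbz⟩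

theorem ball [CharZero k] (M : LPointModule k q g) (hq : q ≠ 0) (hg : 1 ≤ g)
    (ha0 : M.a 0 = 0) {i : ℕ} (hbi : M.b i = 0) : ∀ j, M.b j = 0 := by
  classical
  have hex : ∃ t, 0 < t ∧ M.b (i + t) = 0 := by
    obtain ⟨d, h1, h2, h3⟩ := M.next ha0 hbi
    exact ⟨d, h1, h3⟩
  let d0 := Nat.find hex
  obtain ⟨hd00, hd0z⟩ := Nat.find_spec hex
  have hd0le : d0 ≤ g + 1 := by
    obtain ⟨d, h1, h2, h3⟩ := M.next ha0 hbi
    exact le_trans (Nat.find_le ⟨h1, h3⟩) h2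
  obtain ⟨p, hp0, hp1⟩ := M.adjPair hq ha0 d0 i hd00 hd0le hbi hd0z
    (fun j hj0 hjd hbz => Nat.find_min hex hjd ⟨hj0, hbz⟩)
  have hfwd : ∀ n, M.b (p + n) = 0 ∧ M.b (p + n + 1) = 0 := by
    intro n
    induction n with
    | zero => exact ⟨hp0, hp1⟩
    | succ n ihn =>
      refine ⟨ihn.2, ?_⟩
      have := M.fwd hq hg ha0 ihn.1 ihn.2
      rwa [show p+(n+1)+1 = p+n+2 from by omega]
  have hbwd : ∀ t, M.b (p - t) = 0 ∧ M.b (p - t + 1) = 0 := by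
    intro t
    induction t with
    | zero => exact ⟨hp0, hp1⟩
    | succ t iht =>
      by_cases hpt : p ≤ t
      · rw [show p - (t+1) = p - t from by omega]; exact iht
      · have h1 : M.b (p - (t+1) + 1) = 0 := by
          rw [show p - (t+1) + 1 = p - t from by omega]; exact iht.1
        have h2 : M.b (p - (t+1) + 2) = 0 := by
          rw [show p - (t+1) + 2 = p - t + 1 from by omega]; exact iht.2
        exact ⟨M.bwd hq hg ha0 h1 h2, h1⟩
  intro j
  rcases le_or_gt p j with hpj | hpj
  · have := (hfwd (j - p)).1
    rwa [show p + (j - p) = j from by omega] at this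
  · have := (hbwd (p - j)).1
    rwa [show p - (p - j) = j from by omega] at this

end LPointModule

/-- If `a_0 = 0` and `b_i = 0` for some `i` in a point module over `B(L_q(1,g))`,
then `b_j = 0` for all `j`, hence `P_j = (0 : 0 : 1)` for all `j`; i.e. `a_j = 0`,
`b_j = 0` and `c_j ≠ 0`. -/
theorem stmt17 {k : Type*} [Field k] [CharZero k]
    (q : k) (hq : q ≠ 0) (g : ℕ) (hg : 1 ≤ g)
    (M : LPointModule k q g) (ha0 : M.a 0 = 0) (hb : ∃ i : ℕ, M.b i = 0) :
    ∀ j : ℕ, M.a j = 0 ∧ M.b j = 0 ∧ M.c j ≠ 0 := by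
  obtain ⟨i, hbi⟩ := hb
  have hball := M.ball hq hg ha0 hbi
  exact fun j => ⟨M.azero ha0 j, hball j, M.cne ha0 (hball j)⟩
end

section
/- The isomorphism classes of point modules over B(L_q(1,g)) are in bijection with the points of the projective variety V(X_0 X_2) ⊂ ℙ^2, the union of the two lines X_0 = 0 and X_2 = 0; the bijection sends a point module to its degree-0 point P_0 = (a_0 : b_0 : c_0). -/
namespace LPointModule

variable {k : Type*} [Field k] {q : k} {g : ℕ} (M : LPointModule k q g)

/-- shift of a point module -/
def shift (d : ℕ) : LPointModule k q g where
  a i := M.a (i + d)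
  b i := M.b (i + d)
  c i := M.c (i + d)
  zeta n i := M.zeta n (i + d)
  hzeta0 i := M.hzeta0 (i + d)
  hzetas n i := by
    have h := M.hzetas n (i + d)
    have e1 : i + d + n + 1 = i + n + 1 + d := by omega
    have e2 : i + d + 1 = i + 1 + d := by omega
    rw [e1, e2] at h; exact h
  jordan i := by
    have h := M.jordan (i + d)
    have e : i + d + 1 = i + 1 + d := by omega
    rw [e] at h; exact h
  x1z0 i := by
    have h := M.x1z0 (i + d)
    have e : i + d + 1 = i + 1 + d := by omega
    rw [e] at h; exact h
  zz n i hn := by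
    have h := M.zz n (i + d) hn
    have e1 : i + d + n + 2 = i + n + 2 + d := by omega
    have e2 : i + d + n + 1 = i + n + 1 + d := by omega
    rw [e1, e2] at h; exact h
  x2zg i := by
    have h := M.x2zg (i + d)
    have e1 : i + d + g + 1 = i + g + 1 + d := by omega
    have e2 : i + d + 1 = i + 1 + d := by omega
    rw [e1, e2] at h; exact h
  cyclic i := M.cyclic (i + d)

/-- total relation: `z_{g+1}` acts by zero. -/
lemma ztot (i : ℕ) : M.zeta (g + 1) i = 0 := by
  have h := M.hzetas g i
  have h2 := M.x2zg i
  rw [h, h2]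

/-- zeta over an all-zero window vanishes -/
lemma zwin : ∀ n j, (∀ l, l ≤ n → M.c (j + l) = 0) → M.zeta n j = 0 := by
  intro n
  induction n with
  | zero => intro j h; rw [M.hzeta0 j]; simpa using h 0 (le_refl 0)
  | succ n ih =>
    intro j h
    rw [M.hzetas n j, ih j (fun l hl => h l (Nat.le_succ_of_le hl)),
      ih (j + 1) (fun l hl => by
        have := h (l + 1) (by omega); rwa [show j + (l+1) = j + 1 + l by omega] at this)]
    ring

/-- zeta with zeros after position j -/
lemma zprod : ∀ n j, (∀ l, 1 ≤ l → l ≤ n → M.c (j + l) = 0) →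
    M.zeta n j = M.c j * ∏ l ∈ Finset.range n, M.b (j + 1 + l) := by
  intro n
  induction n with
  | zero => intro j _; simp [M.hzeta0 j]
  | succ n ih =>
    intro j h
    rw [M.hzetas n j, ih j (fun l h1 h2 => h l h1 (Nat.le_succ_of_le h2)),
      M.zwin n (j + 1) (fun l hl => by
        have := h (l + 1) (by omega) (by omega)
        rwa [show j + (l+1) = j + 1 + l by omega] at this),
      Finset.prod_range_succ]
    rw [show j + 1 + n = j + n + 1 by omega]
    ring

/-- zeta over a zero window with one trailing nonzero: top coefficient form -/
lemma ztop : ∀ n j, (∀ l, l ≤ n → M.c (j + l) = 0) →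
    M.zeta (n + 1) j =
      (-q) ^ (n + 1) * (∏ l ∈ Finset.range (n + 1), M.b (j + l)) * M.c (j + n + 1) := by
  intro n
  induction n with
  | zero =>
    intro j h
    rw [M.hzetas 0 j, M.hzeta0, M.hzeta0]
    have := h 0 (le_refl 0)
    simp only [Nat.add_zero] at this
    rw [this]
    simp only [Nat.zero_add, Finset.prod_range_one, pow_one, Nat.add_zero]
    ring
  | succ n ih =>
    intro j h
    rw [M.hzetas (n + 1) j,
      M.zwin (n + 1) j (fun l hl => h l hl),
      ih (j + 1) (fun l hl => by
        have := h (l + 1) (by omega)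
        rwa [show j + (l+1) = j + 1 + l by omega] at this)]
    rw [Finset.prod_range_succ' (fun l => M.b (j + l)) (n + 1)]
    rw [show j + 1 + n + 1 = j + (n + 1) + 1 by omega]
    have : ∀ l, M.b (j + 1 + l) = M.b (j + (l + 1)) := fun l => by
      rw [show j + 1 + l = j + (l + 1) by omega]
    rw [Finset.prod_congr rfl (fun l _ => this l)]
    rw [pow_succ (-q) (n + 1)]
    simp only [Nat.add_zero, Nat.zero_add]
    ring

/-- mixed form : c j = 0, then a nonzero, then zeros -/
lemma zmix : ∀ n j, M.c j = 0 → (∀ l, l < n → M.c (j + 2 + l) = 0) →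
    M.zeta (n + 1) j =
      -((n + 1 : ℕ) : k) * q * M.b j * (∏ l ∈ Finset.range n, M.b (j + 2 + l)) * M.c (j + 1) := by
  intro n
  induction n with
  | zero =>
    intro j hj _
    rw [M.hzetas 0 j, M.hzeta0, M.hzeta0, hj]
    simp only [Nat.zero_add, Finset.prod_range_zero, Nat.cast_one, Nat.add_zero]
    ring
  | succ n ih =>
    intro j hj h
    rw [M.hzetas (n + 1) j, ih j hj (fun l hl => h l (by omega)),
      M.zprod (n + 1) (j + 1) (fun l h1 h2 => by
        rcases Nat.exists_eq_add_of_le h1 with ⟨l', rfl⟩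
        rw [show j + 1 + (1 + l') = j + 2 + l' by omega]
        exact h l' (by omega))]
    have e1 : ∀ l, j + 1 + 1 + l = j + 2 + l := fun l => by omega
    simp only [e1]
    rw [Finset.prod_range_succ]
    rw [show j + (n + 1) + 1 = j + n + 2 by omega, show j + 2 + n = j + n + 2 by omega]
    push_cast
    ring

lemma bnz (ha : ∀ i, M.a i = 0) (i : ℕ) (hc : M.c i = 0) : M.b i ≠ 0 :=
  fun hb => M.cyclic i ⟨ha i, hb, hc⟩

lemma cnz_succ [CharZero k] (hq : q ≠ 0) (hg : 1 ≤ g) (ha : ∀ i, M.a i = 0) :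
    ∀ r, M.c r ≠ 0 → M.c (r + 1) = 0 → False := by
  intro r hr h1
  classical
  -- not all of the next g+1 entries of c can vanish
  have E : ¬ (∀ l, 1 ≤ l → l ≤ g + 1 → M.c (r + l) = 0) := by
    intro hz
    have hp := M.zprod (g + 1) r hz
    rw [M.ztot r] at hp
    have hb : ∀ l ∈ Finset.range (g + 1), M.b (r + 1 + l) ≠ 0 := by
      intro l hl
      apply M.bnz ha
      have := hz (1 + l) (by omega) (by simp at hl; omega)
      rwa [show r + (1 + l) = r + 1 + l by omega] at this
    exact (mul_ne_zero hr (Finset.prod_ne_zero_iff.mpr hb)) hp.symm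
  push_neg at E
  obtain ⟨l0, hl0a, hl0b, hl0c⟩ := E
  -- the first nonzero entry after r
  have hex : ∃ j, M.c (r + 1 + j) ≠ 0 := ⟨l0 - 1, by
    rwa [show r + 1 + (l0 - 1) = r + l0 by omega]⟩
  set m := Nat.find hex with hm
  have hsnz : M.c (r + 1 + m) ≠ 0 := Nat.find_spec hex
  have hzlt : ∀ j, j < m → M.c (r + 1 + j) = 0 := fun j hj => by
    have := Nat.find_min hex hj; simpa using this
  have hm1 : 1 ≤ m := by
    rcases Nat.eq_zero_or_pos m with h | h
    · exfalso; apply hsnz; rw [h]; simpa using h1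
    · exact h
  have hmg : m ≤ g := by
    by_contra hmg
    push_neg at hmg
    have : l0 - 1 < m := by omega
    exact hl0c (by
      have := hzlt (l0 - 1) this
      rwa [show r + 1 + (l0 - 1) = r + l0 by omega] at this)
  -- zeros in the gap, stated conveniently
  have zeros : ∀ l, 1 ≤ l → l ≤ m → M.c (r + l) = 0 := by
    intro l hl1 hl2
    have := hzlt (l - 1) (by omega)
    rwa [show r + 1 + (l - 1) = r + l by omega] at this
  have bz : ∀ l, 1 ≤ l → l ≤ m → M.b (r + l) ≠ 0 := fun l h1' h2' =>
    M.bnz ha _ (zeros l h1' h2')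
  have hs : M.c (r + m + 1) ≠ 0 := by
    rwa [show r + m + 1 = r + 1 + m by omega]
  -- Step 1: vanishing of low zeta's at r + m + 2
  have H1 : ∀ n, n < m → M.zeta n (r + m + 2) = 0 := by
    intro n hn
    have hd1 : 1 ≤ m - n := by omega
    set d := m - n with hdd
    have hdn : d + n = m := by omega
    have hzz := M.zz n (r + d) (lt_of_lt_of_le hn hmg)
    have hwin : ∀ l, l ≤ n → M.c (r + d + l) = 0 := by
      intro l hl
      have := zeros (d + l) (by omega) (by omega)
      rwa [show r + (d + l) = r + d + l by omega] at this
    have h0 : M.zeta n (r + d) = 0 := M.zwin n (r + d) hwin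
    have htop : M.zeta (n + 1) (r + d) ≠ 0 := by
      rw [M.ztop n (r + d) hwin]
      apply mul_ne_zero (mul_ne_zero (pow_ne_zero _ (neg_ne_zero.mpr hq)) ?_) ?_
      · apply Finset.prod_ne_zero_iff.mpr
        intro l hl
        simp only [Finset.mem_range] at hl
        have := bz (d + l) (by omega) (by omega)
        rwa [show r + (d + l) = r + d + l by omega] at this
      · rwa [show r + d + n + 1 = r + m + 1 by omega]
    rw [h0, show r + d + n + 2 = r + m + 2 by omega] at hzz
    simp only [mul_zero, zero_mul, sub_zero] at hzz
    rcases mul_eq_zero.mp hzz with h | h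
    · exact absurd h htop
    · exact h
  -- Step 2: the c's after position r+m+1 vanish as well
  have Z2 : ∀ n, n < m → M.c (r + m + 2 + n) = 0 := by
    intro n
    induction n using Nat.strong_induction_on with
    | _ n ih =>
      intro hn
      cases n with
      | zero =>
        have := H1 0 hn
        rwa [M.hzeta0] at this
      | succ n' =>
        have hwin : ∀ l, l ≤ n' → M.c (r + m + 2 + l) = 0 := fun l hl => ih l (by omega) (by omega)
        have htop := M.ztop n' (r + m + 2) hwin
        rw [H1 (n' + 1) hn] at htop
        have hbnz : ∀ l ∈ Finset.range (n' + 1), M.b (r + m + 2 + l) ≠ 0 := by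
          intro l hl
          simp only [Finset.mem_range] at hl
          exact M.bnz ha _ (hwin l (by omega))
        have := mul_ne_zero (pow_ne_zero (n' + 1) (neg_ne_zero.mpr hq))
          (Finset.prod_ne_zero_iff.mpr hbnz)
        rcases mul_eq_zero.mp htop.symm with h | h
        · exact absurd h this
        · rwa [show r + m + 2 + n' + 1 = r + m + 2 + (n' + 1) by omega] at h
  -- Step 3: the contradiction
  clear_value m
  obtain ⟨t, rfl⟩ : ∃ t, m = t + 1 := ⟨m - 1, by omega⟩
  have hzzM := M.zz t r (by omega)
  have hA : M.zeta (t + 1) r =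
      M.c r * ((∏ l ∈ Finset.range t, M.b (r + 1 + l)) * M.b (r + 1 + t)) := by
    rw [M.zprod (t + 1) r (fun l h1' h2' => zeros l h1' h2'), Finset.prod_range_succ]
  have hC : M.zeta t r = M.c r * ∏ l ∈ Finset.range t, M.b (r + 1 + l) :=
    M.zprod t r (fun l h1' h2' => zeros l h1' (by omega))
  have hB : M.zeta t (r + t + 2) =
      M.c (r + t + 2) * ∏ l ∈ Finset.range t, M.b (r + t + 2 + 1 + l) := by
    apply M.zprod t (r + t + 2)
    intro l h1' h2'
    have := Z2 (l - 1) (by omega)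
    rwa [show r + (t + 1) + 2 + (l - 1) = r + t + 2 + l by omega] at this
  have hD : M.zeta (t + 1) (r + t + 1) =
      -((t + 1 : ℕ) : k) * q * M.b (r + t + 1) *
        (∏ l ∈ Finset.range t, M.b (r + t + 1 + 2 + l)) * M.c (r + t + 1 + 1) := by
    apply M.zmix t (r + t + 1)
    · have := zeros (t + 1) (by omega) (by omega)
      rwa [show r + (t + 1) = r + t + 1 by omega] at this
    · intro l hl
      have := Z2 l (by omega)
      rwa [show r + (t + 1) + 2 + l = r + t + 1 + 2 + l by omega] at this
  rw [hA, hB, hC, hD] at hzzM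
  have e1 : ∀ l, r + t + 1 + 2 + l = r + t + 2 + 1 + l := fun l => by omega
  simp only [e1, show r + t + 1 + 1 = r + t + 2 by omega,
    show r + 1 + t = r + t + 1 by omega] at hzzM
  set P1 := ∏ l ∈ Finset.range t, M.b (r + 1 + l) with hP1
  set P2 := ∏ l ∈ Finset.range t, M.b (r + t + 2 + 1 + l) with hP2
  have h2 : q⁻¹ * q = 1 := inv_mul_cancel₀ hq
  have hYeq : ((t : k) + 2) * (M.c r * M.c (r + t + 2) * P1 * P2 * M.b (r + t + 1)) = 0 := by
    push_cast at hzzM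
    linear_combination hzzM - ((t : k) + 1) * (M.c r * M.c (r + t + 2) * P1 * P2 * M.b (r + t + 1)) * h2
  have hYnz : M.c r * M.c (r + t + 2) * P1 * P2 * M.b (r + t + 1) ≠ 0 := by
    apply mul_ne_zero (mul_ne_zero (mul_ne_zero (mul_ne_zero hr ?_) ?_) ?_) ?_
    · rwa [show r + t + 2 = r + 1 + (t + 1) by omega]
    · exact Finset.prod_ne_zero_iff.mpr (fun l hl => by
        simp only [Finset.mem_range] at hl
        have := bz (1 + l) (by omega) (by omega)
        rwa [show r + (1 + l) = r + 1 + l by omega] at this)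
    · exact Finset.prod_ne_zero_iff.mpr (fun l hl => by
        simp only [Finset.mem_range] at hl
        apply M.bnz ha
        have := Z2 l (by omega)
        rwa [show r + (t + 1) + 2 + l = r + t + 2 + 1 + l by omega] at this)
    · have := bz (t + 1) (by omega) (le_refl _)
      rwa [show r + (t + 1) = r + t + 1 by omega] at this
  have ht2 : (t : k) + 2 ≠ 0 := by
    have h3 : (((t + 2 : ℕ)) : k) ≠ 0 := Nat.cast_ne_zero.mpr (by omega)
    push_cast at h3
    exact h3
  exact (mul_ne_zero ht2 hYnz) hYeq

lemma czero_succ [CharZero k] (hq : q ≠ 0) (hg : 1 ≤ g) (ha : ∀ i, M.a i = 0) :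
    ∀ i, M.c i = 0 → M.c (i + 1) = 0 := by
  intro i hci
  by_contra hc1
  -- zeta 1 i = - q * b i * c (i+1) ≠ 0
  have hz1 : M.zeta 1 i = - (q * M.b i * M.c (i + 1)) := by
    rw [M.hzetas 0 i, M.hzeta0, M.hzeta0, hci]; ring
  have hz1nz : M.zeta 1 i ≠ 0 := by
    rw [hz1]
    exact neg_ne_zero.mpr (mul_ne_zero (mul_ne_zero hq (M.bnz ha i hci)) hc1)
  have hzz := M.zz 0 i (by omega)
  rw [M.hzeta0 i, hci, zero_mul, mul_zero, sub_zero] at hzz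
  rcases mul_eq_zero.mp hzz with h | h
  · exact hz1nz h
  · rw [M.hzeta0] at h
    exact M.cnz_succ hq hg ha (i + 1) hc1 (by rwa [show i + 0 + 2 = i + 1 + 1 by omega] at h)

/-- In the all-`c`-nonzero regime, `zeta 1` vanishes identically. -/
lemma allc_w0 [CharZero k] (hq : q ≠ 0) (hg : 1 ≤ g) (hc : ∀ i, M.c i ≠ 0) :
    ∀ i, M.zeta 1 i = 0 := by
  obtain ⟨u, hu⟩ : ∃ u, M.zeta 1 0 = u * (M.c 0 * M.c 1) :=
    ⟨M.zeta 1 0 / (M.c 0 * M.c 1),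
      (div_mul_cancel₀ (M.zeta 1 0) (mul_ne_zero (hc 0) (hc 1))).symm⟩
  -- the first-order coefficient propagates geometrically
  have W : ∀ i, M.zeta 1 i = q ^ i * u * (M.c i * M.c (i + 1)) := by
    intro i
    induction i with
    | zero => rw [hu]; ring
    | succ i ih =>
      have hstep : M.c i * M.zeta 1 (i + 1) = q * M.zeta 1 i * M.c (i + 2) := by
        have hzz := M.zz 0 i (by omega)
        rw [M.hzeta0 i, M.hzeta0 (i + 0 + 2)] at hzz
        simp only [show i + 0 + 2 = i + 2 by omega, show i + 0 + 1 = i + 1 by omega] at hzz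
        have h2 : q * q⁻¹ = 1 := mul_inv_cancel₀ hq
        linear_combination (-q) * hzz - (M.c i * M.zeta 1 (i + 1)) * h2
      rw [ih] at hstep
      have e2 : i + 1 + 1 = i + 2 := by omega
      rw [e2]
      apply mul_left_cancel₀ (hc i)
      rw [hstep]
      ring
  -- the (scaled) slope of b relative to c, in cleared form
  have G : ∀ j, q * M.b j * M.c 0 =
      q ^ (j + 1) * M.b 0 * M.c j + (j : k) * q ^ j * u * M.c j * M.c 0 := by
    intro j
    induction j with
    | zero => simp
    | succ j ih =>
      have hw : M.zeta 1 j = M.b (j + 0 + 1) * M.c j - q * M.b j * M.c (j + 1) := by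
        rw [M.hzetas 0 j, M.hzeta0, M.hzeta0]
      rw [W j] at hw
      simp only [show j + 0 + 1 = j + 1 by omega] at hw
      -- cleared recurrence for b
      have step' : M.b (j + 1) * M.c j = (q * M.b j + q ^ j * u * M.c j) * M.c (j + 1) := by
        linear_combination -hw
      apply mul_left_cancel₀ (hc j)
      have expand : M.c j * (q * M.b (j + 1) * M.c 0) = (q * M.c 0) * (M.b (j + 1) * M.c j) := by
        ring
      rw [expand, step']
      push_cast
      linear_combination (q * M.c (j + 1)) * ih
  -- key: u must vanish
  have hu0 : u = 0 := by
    by_contra hu0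
    -- both parts of the bridge, by induction on n
    have P : ∀ n, (∀ i, M.c i * M.zeta n (i + 1) = q ^ n * M.c (i + n + 1) * M.zeta n i) ∧
        (∀ i, M.zeta (n + 1) i = ((n + 1 : ℕ) : k) * q ^ (i + n) * u * M.c (i + n + 1) * M.zeta n i) := by
      intro n
      induction n with
      | zero =>
        constructor
        · intro i
          rw [M.hzeta0, M.hzeta0, show i + 0 + 1 = i + 1 by omega]
          ring
        · intro i
          rw [W i, M.hzeta0, show i + 0 + 1 = i + 1 by omega]
          push_cast
          simp only [Nat.add_zero]
          ring
      | succ n ih =>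
        obtain ⟨ihd, ihz⟩ := ih
        have dag : ∀ i, M.c i * M.zeta (n + 1) (i + 1) =
            q ^ (n + 1) * M.c (i + (n + 1) + 1) * M.zeta (n + 1) i := by
          intro i
          rw [ihz (i + 1), ihz i]
          have h1 := ihd i
          rw [show i + 1 + n + 1 = i + (n + 1) + 1 by omega,
            show i + 1 + n = i + n + 1 by omega]
          calc M.c i * (((n + 1 : ℕ) : k) * q ^ (i + n + 1) * u * M.c (i + (n + 1) + 1) * M.zeta n (i + 1))
              = ((n + 1 : ℕ) : k) * q ^ (i + n + 1) * u * M.c (i + (n + 1) + 1) * (M.c i * M.zeta n (i + 1)) := by ring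
            _ = ((n + 1 : ℕ) : k) * q ^ (i + n + 1) * u * M.c (i + (n + 1) + 1) * (q ^ n * M.c (i + n + 1) * M.zeta n i) := by rw [h1]
            _ = q ^ (n + 1) * M.c (i + (n + 1) + 1) * (((n + 1 : ℕ) : k) * q ^ (i + n) * u * M.c (i + n + 1) * M.zeta n i) := by
                ring
        refine ⟨dag, ?_⟩
        intro i
        have hd := dag i
        simp only [show i + (n + 1) + 1 = i + n + 2 by omega] at hd
        -- the key identity, derived from G
        have key : q * (M.b (i + n + 2) * M.c i - q ^ (n + 2) * M.b i * M.c (i + n + 2)) =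
            ((n + 2 : ℕ) : k) * q ^ (i + n + 2) * u * M.c (i + n + 2) * M.c i := by
          have g1 := G (i + n + 2)
          have g2 := G i
          apply mul_right_cancel₀ (hc 0)
          push_cast at g1 g2 ⊢
          linear_combination M.c i * g1 - q ^ (n + 2) * M.c (i + n + 2) * g2
        apply mul_left_cancel₀ (mul_ne_zero hq (hc i))
        rw [M.hzetas (n + 1) i]
        simp only [show i + (n + 1) + 1 = i + n + 2 by omega,
          show i + n + 1 + 1 = i + n + 2 by omega, show i + (n + 1) = i + n + 1 by omega]
        push_cast
        push_cast at key
        linear_combination (-(q * q) * M.b i) * hd + M.zeta (n + 1) i * key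
    -- nonvanishing of zeta n 0 for all n
    have znz : ∀ n, M.zeta n 0 ≠ 0 := by
      intro n
      induction n with
      | zero => rw [M.hzeta0]; exact hc 0
      | succ n ih =>
        rw [(P n).2 0]
        refine mul_ne_zero (mul_ne_zero (mul_ne_zero (mul_ne_zero ?_ (pow_ne_zero _ hq)) hu0) (hc _)) ih
        exact Nat.cast_ne_zero.mpr (by omega)
    exact znz (g + 1) (M.ztot 0)
  intro i
  rw [W i, hu0]
  ring

/-- If `x₁` acts by zero, then `zeta 1` acts by zero. -/
lemma azero_w [CharZero k] (hq : q ≠ 0) (hg : 1 ≤ g) (ha : ∀ i, M.a i = 0) :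
    ∀ i, M.zeta 1 i = 0 := by
  rcases eq_or_ne (M.c 0) 0 with h0 | h0
  · -- c is identically zero
    have hz : ∀ i, M.c i = 0 := by
      intro i
      induction i with
      | zero => exact h0
      | succ i ih => exact M.czero_succ hq hg ha i ih
    intro i
    rw [M.hzetas 0 i, M.hzeta0, M.hzeta0, hz i, hz (i + 1)]
    ring
  · -- c is nowhere zero
    have hz : ∀ i, M.c i ≠ 0 := by
      intro i
      induction i with
      | zero => exact h0
      | succ i ih => exact fun h => M.cnz_succ hq hg ha i ih h
    exact M.allc_w0 hq hg hz

/-- the point of a point module lies on `V(X₀X₂)`, in every degree -/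
lemma ac_zero_zero [CharZero k] (hq : q ≠ 0) (hg : 1 ≤ g) : M.a 0 * M.c 0 = 0 := by
  by_contra h
  have ha0 : M.a 0 ≠ 0 := fun h' => h (by rw [h']; ring)
  have hc0 : M.c 0 ≠ 0 := fun h' => h (by rw [h']; ring)
  -- all a's are nonzero
  have hA : ∀ i, M.a i ≠ 0 := by
    intro i
    induction i with
    | zero => exact ha0
    | succ i ih =>
      intro h1
      have hj := M.jordan i
      have hx := M.x1z0 i
      rw [h1] at hj hx
      have hb1 : M.b (i + 1) = 0 := by
        have h2 : M.a i * M.b (i + 1) = 0 := by linear_combination hj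
        rcases mul_eq_zero.mp h2 with h | h
        · exact absurd h ih
        · exact h
      have hc1 : M.c (i + 1) = 0 := by
        have h2 : q * M.a i * M.c (i + 1) = 0 := by linear_combination -hx
        rcases mul_eq_zero.mp h2 with h | h
        · rcases mul_eq_zero.mp h with h | h
          · exact absurd h hq
          · exact absurd h ih
        · exact h
      exact M.cyclic (i + 1) ⟨h1, hb1, hc1⟩
  -- linear growth of b relative to a
  have hBn : ∀ n i, M.a i * M.b (i + n) =
      M.a (i + n) * M.b i - ((n : k) / 2) * (M.a i * M.a (i + n)) := by
    intro n
    induction n with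
    | zero => intro i; simp
    | succ n ih =>
      intro i
      have hj := M.jordan (i + n)
      have e : i + n + 1 = i + (n + 1) := by omega
      rw [e] at hj
      apply mul_left_cancel₀ (hA (i + n))
      push_cast
      linear_combination M.a i * hj + M.a (i + (n + 1)) * (ih i)
  -- closed form for zeta
  have Z : ∀ n i, M.zeta n i =
      ((-(1 : k) / 2) ^ n * (Nat.factorial n : k)) * M.c i *
        ∏ l ∈ Finset.range n, M.a (i + 1 + l) := by
    intro n
    induction n with
    | zero => intro i; simp [M.hzeta0]
    | succ n ih =>
      intro i
      rw [M.hzetas n i, ih i, ih (i + 1)]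
      have eprod : ∏ l ∈ Finset.range n, M.a (i + 1 + 1 + l) =
          ∏ l ∈ Finset.range n, M.a (i + 1 + (l + 1)) := by
        apply Finset.prod_congr rfl
        intro l _
        rw [show i + 1 + 1 + l = i + 1 + (l + 1) by omega]
      rw [eprod, Finset.prod_range_succ (fun l => M.a (i + 1 + l)) n,
        Nat.factorial_succ, show i + n + 1 = i + (n + 1) by omega,
        show i + 1 + n = i + (n + 1) by omega]
      have hb := hBn (n + 1) i
      have hx' : q * M.c (i + 1) * M.a i = M.a (i + 1) * M.c i := by
        linear_combination -(M.x1z0 i)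
      have e3 : M.a (i + 1) * (∏ l ∈ Finset.range n, M.a (i + 1 + (l + 1))) =
          (∏ l ∈ Finset.range n, M.a (i + 1 + l)) * M.a (i + (n + 1)) := by
        rw [show i + (n + 1) = i + 1 + n by omega,
          ← Finset.prod_range_succ (fun l => M.a (i + 1 + l)) n,
          Finset.prod_range_succ' (fun l => M.a (i + 1 + l)) n]
        simp only [Nat.add_zero]
        ring
      apply mul_left_cancel₀ (hA i)
      push_cast
      push_cast at hb
      linear_combination
        ((-(1 : k) / 2) ^ n * (Nat.factorial n : k) * M.c i *
            (∏ l ∈ Finset.range n, M.a (i + 1 + l))) * hb -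
        ((-(1 : k) / 2) ^ n * (Nat.factorial n : k) * M.b i *
            (∏ l ∈ Finset.range n, M.a (i + 1 + (l + 1)))) * hx' -
        ((-(1 : k) / 2) ^ n * (Nat.factorial n : k) * M.b i * M.c i) * e3
  -- contradiction with the total relation
  have hzg := M.ztot 0
  rw [Z (g + 1) 0] at hzg
  have hfac : ((-(1 : k) / 2) ^ (g + 1) * (Nat.factorial (g + 1) : k)) ≠ 0 := by
    apply mul_ne_zero (pow_ne_zero _ (by norm_num)) (Nat.cast_ne_zero.mpr (Nat.factorial_ne_zero _))
  have hprod : ∏ l ∈ Finset.range (g + 1), M.a (0 + 1 + l) ≠ 0 :=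
    Finset.prod_ne_zero_iff.mpr (fun l _ => hA _)
  exact (mul_ne_zero (mul_ne_zero hfac hc0) hprod) hzg

lemma ac_zero [CharZero k] (hq : q ≠ 0) (hg : 1 ≤ g) (i : ℕ) : M.a i * M.c i = 0 := by
  have h := (M.shift i).ac_zero_zero hq hg
  simpa [shift] using h

lemma w_eq (i : ℕ) :
    M.zeta 1 i = M.b (i + 1) * M.c i - q * M.b i * M.c (i + 1) := by
  rw [M.hzetas 0 i, M.hzeta0, M.hzeta0, show i + 0 + 1 = i + 1 by omega]

lemma a_nz_succ (hq : q ≠ 0) (i : ℕ) (ha : M.a i ≠ 0) : M.a (i + 1) ≠ 0 := by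
  intro h1
  have hj := M.jordan i
  have hx := M.x1z0 i
  rw [h1] at hj hx
  have hb1 : M.b (i + 1) = 0 := by
    have h2 : M.a i * M.b (i + 1) = 0 := by linear_combination hj
    rcases mul_eq_zero.mp h2 with h | h
    · exact absurd h ha
    · exact h
  have hc1 : M.c (i + 1) = 0 := by
    have h2 : q * M.a i * M.c (i + 1) = 0 := by linear_combination -hx
    rcases mul_eq_zero.mp h2 with h | h
    · rcases mul_eq_zero.mp h with h | h
      · exact absurd h hq
      · exact absurd h ha
    · exact h
  exact M.cyclic (i + 1) ⟨h1, hb1, hc1⟩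

lemma a_zero_succ (hq : q ≠ 0) (i : ℕ) (ha : M.a i = 0) : M.a (i + 1) = 0 := by
  by_contra h1
  have hj := M.jordan i
  have hx := M.x1z0 i
  rw [ha] at hj hx
  have hb : M.b i = 0 := by
    have h2 : M.a (i + 1) * M.b i = 0 := by linear_combination -hj
    rcases mul_eq_zero.mp h2 with h | h
    · exact absurd h h1
    · exact h
  have hc : M.c i = 0 := by
    have h2 : M.a (i + 1) * M.c i = 0 := by linear_combination hx
    rcases mul_eq_zero.mp h2 with h | h
    · exact absurd h h1
    · exact h
  exact M.cyclic i ⟨ha, hb, hc⟩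

lemma a_zero_tail (hq : q ≠ 0) (i : ℕ) (ha : M.a i = 0) : ∀ d, M.a (i + d) = 0 := by
  intro d
  induction d with
  | zero => exact ha
  | succ d ih => rw [show i + (d + 1) = (i + d) + 1 by omega]; exact M.a_zero_succ hq _ ih

/-- In the `a = 0` regime, the next point is proportional to `(q b_i, c_i)`. -/
lemma next_scalar [CharZero k] (hq : q ≠ 0) (hg : 1 ≤ g) (i : ℕ) (ha : M.a i = 0) :
    ∃ s : k, s ≠ 0 ∧ M.b (i + 1) = s * (q * M.b i) ∧ M.c (i + 1) = s * M.c i := by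
  have ha1 : M.a (i + 1) = 0 := M.a_zero_succ hq i ha
  -- zeta 1 i = 0
  have hw : M.b (i + 1) * M.c i - q * M.b i * M.c (i + 1) = 0 := by
    have haall : ∀ j, (M.shift i).a j = 0 := by
      intro j
      show M.a (j + i) = 0
      rw [show j + i = i + j by omega]
      exact M.a_zero_tail hq i ha j
    have h0 := (M.shift i).azero_w hq hg haall 0
    rw [(M.shift i).w_eq 0] at h0
    simp only [shift] at h0
    rw [show 0 + 1 + i = i + 1 by omega, show (0 : ℕ) + i = i by omega] at h0
    exact h0
  rcases eq_or_ne (M.c i) 0 with hc | hc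
  · -- c i = 0, so b i ≠ 0 and c (i+1) = 0, b (i+1) ≠ 0
    have hb : M.b i ≠ 0 := fun h => M.cyclic i ⟨ha, h, hc⟩
    have hc1 : M.c (i + 1) = 0 := by
      have h2 : q * M.b i * M.c (i + 1) = 0 := by rw [hc] at hw; linear_combination -hw
      rcases mul_eq_zero.mp h2 with h | h
      · rcases mul_eq_zero.mp h with h | h
        · exact absurd h hq
        · exact absurd h hb
      · exact h
    have hb1 : M.b (i + 1) ≠ 0 := fun h => M.cyclic (i + 1) ⟨ha1, h, hc1⟩
    refine ⟨M.b (i + 1) / (q * M.b i), ?_, ?_, ?_⟩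
    · exact div_ne_zero hb1 (mul_ne_zero hq hb)
    · rw [div_mul_cancel₀ _ (mul_ne_zero hq hb)]
    · rw [hc1, hc, mul_zero]
  · -- c i ≠ 0
    refine ⟨M.c (i + 1) / M.c i, ?_, ?_, ?_⟩
    · intro h
      have hc1 : M.c (i + 1) = 0 := (div_eq_zero_iff.mp h).resolve_right hc
      have hb1 : M.b (i + 1) = 0 := by
        rw [hc1] at hw
        have h2 : M.b (i + 1) * M.c i = 0 := by linear_combination hw
        rcases mul_eq_zero.mp h2 with h | h
        · exact h
        · exact absurd h hc
      exact M.cyclic (i + 1) ⟨ha1, hb1, hc1⟩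
    · apply mul_right_cancel₀ hc
      field_simp
      linear_combination hw
    · rw [div_mul_cancel₀ _ hc]

/-- transition step for rigidity -/
lemma trans_step [CharZero k] (hq : q ≠ 0) (hg : 1 ≤ g) (M' : LPointModule k q g) (i : ℕ)
    (h : ∃ t : k, t ≠ 0 ∧ M'.a i = t * M.a i ∧ M'.b i = t * M.b i ∧ M'.c i = t * M.c i) :
    ∃ t : k, t ≠ 0 ∧ M'.a (i + 1) = t * M.a (i + 1) ∧ M'.b (i + 1) = t * M.b (i + 1) ∧
      M'.c (i + 1) = t * M.c (i + 1) := by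
  obtain ⟨t, ht, hA, hB, hC⟩ := h
  rcases eq_or_ne (M.a i) 0 with hz | hnz
  · -- a i = 0 case
    have hz' : M'.a i = 0 := by rw [hA, hz, mul_zero]
    have ha1 : M.a (i + 1) = 0 := M.a_zero_succ hq i hz
    have ha1' : M'.a (i + 1) = 0 := M'.a_zero_succ hq i hz'
    obtain ⟨s, hs, hsb, hsc⟩ := M.next_scalar hq hg i hz
    obtain ⟨s', hs', hsb', hsc'⟩ := M'.next_scalar hq hg i hz'
    refine ⟨s' * t / s, ?_, ?_, ?_, ?_⟩
    · exact div_ne_zero (mul_ne_zero hs' ht) hs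
    · rw [ha1, ha1', mul_zero]
    · rw [hsb', hsb, hB]
      field_simp
    · rw [hsc', hsc, hC]
      field_simp
  · -- a i ≠ 0 case
    have hnz' : M'.a i ≠ 0 := by rw [hA]; exact mul_ne_zero ht hnz
    have hc : M.c i = 0 := by
      rcases mul_eq_zero.mp (M.ac_zero hq hg i) with h | h
      · exact absurd h hnz
      · exact h
    have hc' : M'.c i = 0 := by rw [hC, hc, mul_zero]
    have ha1 : M.a (i + 1) ≠ 0 := M.a_nz_succ hq i hnz
    have ha1' : M'.a (i + 1) ≠ 0 := M'.a_nz_succ hq i hnz'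
    have hc1 : M.c (i + 1) = 0 := by
      have hx := M.x1z0 i
      rw [hc] at hx
      have h2 : q * M.a i * M.c (i + 1) = 0 := by linear_combination -hx
      rcases mul_eq_zero.mp h2 with h | h
      · rcases mul_eq_zero.mp h with h | h
        · exact absurd h hq
        · exact absurd h hnz
      · exact h
    have hc1' : M'.c (i + 1) = 0 := by
      have hx := M'.x1z0 i
      rw [hc'] at hx
      have h2 : q * M'.a i * M'.c (i + 1) = 0 := by linear_combination -hx
      rcases mul_eq_zero.mp h2 with h | h
      · rcases mul_eq_zero.mp h with h | h
        · exact absurd h hq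
        · exact absurd h hnz'
      · exact h
    set t' := M'.a (i + 1) / M.a (i + 1) with ht'
    have hta : M'.a (i + 1) = t' * M.a (i + 1) := by
      rw [ht', div_mul_cancel₀ _ ha1]
    refine ⟨t', div_ne_zero ha1' ha1, hta, ?_, by rw [hc1, hc1', mul_zero]⟩
    -- b transition from jordan
    have j1 := M.jordan i
    have j2 := M'.jordan i
    rw [hA, hB, hta] at j2
    apply mul_left_cancel₀ (mul_ne_zero ht hnz)
    linear_combination j2 - t * t' * j1

end LPointModule

namespace LPointModule

variable {k : Type*} [Field k] {q : k} {g : ℕ}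

/-- point module on the line `X₂ = 0` (or the vertex `(0:1:0)`) -/
def onX2 (q : k) (g : ℕ) (A B : k) (hAB : ¬(A = 0 ∧ B = 0)) : LPointModule k q g where
  a _ := A
  b i := B - (i : k) * A / 2
  c _ := 0
  zeta _ _ := 0
  hzeta0 _ := rfl
  hzetas n i := by ring
  jordan i := by push_cast; ring
  x1z0 i := by ring
  zz n i _ := by ring
  x2zg i := by ring
  cyclic i := by
    rintro ⟨h1, h2, -⟩
    rw [h1] at h2
    simp only [mul_zero, zero_div, sub_zero] at h2
    exact hAB ⟨h1, h2⟩

/-- point module on the line `X₀ = 0` with `c ≠ 0` -/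
def onX0 (q : k) (g : ℕ) (hg : 1 ≤ g) (B C : k) (hC : C ≠ 0) : LPointModule k q g where
  a _ := 0
  b i := q ^ i * B
  c _ := C
  zeta n _ := match n with
    | 0 => C
    | _ + 1 => 0
  hzeta0 _ := rfl
  hzetas n i := by
    cases n with
    | zero => show (0 : k) = q ^ (i + 0 + 1) * B * C - q * (q ^ i * B) * C; ring
    | succ n => show (0 : k) = q ^ (i + n + 1 + 1) * B * 0 - q * (q ^ i * B) * 0; ring
  jordan i := by ring
  x1z0 i := by ring
  zz n i _ := by
    show (0 : k) * _ - q⁻¹ * (_ * 0) = 0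
    ring
  x2zg i := by
    obtain ⟨g', rfl⟩ : ∃ g', g = g' + 1 := ⟨g - 1, by omega⟩
    show q ^ (i + (g' + 1) + 1) * B * 0 - q * (q ^ i * B) * 0 = 0
    ring
  cyclic i := by rintro ⟨-, -, h3⟩; exact hC h3

end LPointModule

/-- The isomorphism classes of point modules over `B(L_q(1,g))` are parametrized
by the projective variety `V(X₀X₂) ⊂ ℙ²` via `V ↦ P₀ = (a_0 : b_0 : c_0)`:
(1) the degree-0 point of every point module lies on `V(X₀X₂)`, i.e. `a_0 c_0 = 0`;
(2) every point of `V(X₀X₂)` arises as the degree-0 point of some point module;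
(3) two point modules with proportional degree-0 points are isomorphic, i.e. all
their coordinate points `P_i` are proportional. -/
theorem stmt18 {k : Type*} [Field k] [CharZero k]
    (q : k) (hq : q ≠ 0) (g : ℕ) (hg : 1 ≤ g) :
    (∀ M : LPointModule k q g, M.a 0 * M.c 0 = 0) ∧
    (∀ A B C : k, A * C = 0 → ¬(A = 0 ∧ B = 0 ∧ C = 0) →
      ∃ M : LPointModule k q g, M.a 0 = A ∧ M.b 0 = B ∧ M.c 0 = C) ∧
    (∀ M M' : LPointModule k q g,
      (∃ t : k, t ≠ 0 ∧ M'.a 0 = t * M.a 0 ∧ M'.b 0 = t * M.b 0 ∧ M'.c 0 = t * M.c 0) →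
      ∀ i : ℕ, ∃ t : k, t ≠ 0 ∧
        M'.a i = t * M.a i ∧ M'.b i = t * M.b i ∧ M'.c i = t * M.c i) := by
  refine ⟨fun M => M.ac_zero_zero hq hg, ?_, ?_⟩
  · intro A B C hAC hABC
    rcases eq_or_ne C 0 with hC | hC
    · subst hC
      refine ⟨LPointModule.onX2 q g A B ?_, rfl, ?_, rfl⟩
      · rintro ⟨h1, h2⟩; exact hABC ⟨h1, h2, rfl⟩
      · show B - (0 : ℕ) * A / 2 = B
        simp
    · have hA : A = 0 := by
        rcases mul_eq_zero.mp hAC with h | h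
        · exact h
        · exact absurd h hC
      subst hA
      refine ⟨LPointModule.onX0 q g hg B C hC, rfl, ?_, rfl⟩
      · show q ^ (0 : ℕ) * B = B
        simp
  · intro M M' h0 i
    induction i with
    | zero => exact h0
    | succ i ih => exact M.trans_step hq hg M' i ih
end
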